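/- arXiv:1701.04476 — 3 statements merged into one kernel-verified Lean document; each statement's English description precedes it below -/
import Mathlib

section
/- Let J be a finite index set, and for each j ∈ J let Δy_j > 0, h_{2,j} ≥ 0, and β_j, h_{1,j} be real numbers. Let A, A_c be real numbers and set A_1 = min(A, A_c). Assume A = A_1 + Σ_{j∈J} h_{2,j}·Δy_j, and assume that A_1 = A_c implies h_{1,j} = β_j for all j ∈ J. Then (β_j − h_{1,j})·h_{2,j} = 0 for every j ∈ J. -/
/-! The lower-layer area `A₁ = min A A_c` is either `A_c`, in which case the lower layer is full,
or `A` itself, in which case mass conservation forces the nonnegative upper-layer volumes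
`h_{2,j} Δy_j` to sum to zero, so every `h_{2,j}` vanishes. -/

theorem Finset.eq_zero_of_sum_mul_eq_zero_of_pos {ι R : Type*} [Semiring R] [PartialOrder R]
    [IsOrderedRing R] [NoZeroDivisors R] {s : Finset ι} {f g : ι → R}
    (hf : ∀ i ∈ s, 0 ≤ f i) (hg : ∀ i ∈ s, 0 < g i) (hsum : ∑ i ∈ s, f i * g i = 0)
    {i : ι} (hi : i ∈ s) : f i = 0 := by
  have hfg : f i * g i = 0 :=
    (Finset.sum_eq_zero_iff_of_nonneg fun k hk => mul_nonneg (hf k hk) (hg k hk).le).mp hsum i hi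
  exact (mul_eq_zero.mp hfg).resolve_right (hg i hi).ne'

/-- No-numerical-flooding property (i): either the lower layer is full or
the upper layer is empty, `(β_j − h_{1,j})·h_{2,j} = 0`. -/
theorem no_numerical_flooding_i (J : Type*) [Fintype J]
    (Δy h2 β h1 : J → ℝ) (hΔy : ∀ j, 0 < Δy j) (hh2 : ∀ j, 0 ≤ h2 j)
    (A Ac A1 : ℝ) (hA1 : A1 = min A Ac)
    (hmass : A = A1 + ∑ j, h2 j * Δy j)
    (hfull : A1 = Ac → ∀ j, h1 j = β j) :
    ∀ j, (β j - h1 j) * h2 j = 0 := by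
  intro j
  rcases min_choice A Ac with hmin | hmin
  · have hupper : ∑ j, h2 j * Δy j = 0 := by linarith
    have h2j : h2 j = 0 := Finset.eq_zero_of_sum_mul_eq_zero_of_pos (fun i _ => hh2 i)
      (fun i _ => hΔy i) hupper (Finset.mem_univ j)
    rw [h2j, mul_zero]
  · rw [hfull (hA1.trans hmin) j, sub_self, zero_mul]
end

section
/- Let J be a finite index set, and for each j ∈ J let Δy_j > 0 and h_{2,j} ≥ 0. Let A, A_c, A_1, η_1, η^β be real numbers with A_1 = min(A, A_c) and A = A_1 + Σ_{j∈J} h_{2,j}·Δy_j. Define η_j = η_1 + h_{2,j} for j ∈ J, and assume that A_1 = A_c implies η_1 = η^β. If there exists j* ∈ J with η_{j*} < η^β, then η_j = η_{j*} for all j ∈ J. -/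
/-! If the lower layer were bank-full, its top would sit at the wall elevation and no free
surface could lie below the wall. So a free surface below the wall forces `A₁ = A`, mass
conservation leaves no water for the upper layer, and every sub-cell surface equals `η₁`. -/

theorem Finset.eq_zero_of_sum_mul_eq_zero {ι R : Type*} [Semiring R] [PartialOrder R]
    [IsOrderedRing R] [NoZeroDivisors R] {s : Finset ι} {f w : ι → R}
    (hf : ∀ i ∈ s, 0 ≤ f i) (hw : ∀ i ∈ s, 0 < w i) (hsum : ∑ i ∈ s, f i * w i = 0) :
    ∀ i ∈ s, f i = 0 := fun i hi =>
  (mul_eq_zero_iff_right (hw i hi).ne').mp <|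
    (Finset.sum_eq_zero_iff_of_nonneg fun j hj => mul_nonneg (hf j hj) (hw j hj).le).mp hsum i hi

/-- No-numerical-flooding property (iii) / discrete consistency: if the free
surface is below the channel wall elevation somewhere in the cell, then it is
laterally flat throughout the cell. -/
theorem no_numerical_flooding_iii (J : Type*) [Fintype J]
    (Δy h2 : J → ℝ) (hΔy : ∀ j, 0 < Δy j) (hh2 : ∀ j, 0 ≤ h2 j)
    (A Ac A1 η1 ηβ : ℝ) (hA1 : A1 = min A Ac)
    (hmass : A = A1 + ∑ j, h2 j * Δy j)
    (η : J → ℝ) (hη : ∀ j, η j = η1 + h2 j)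
    (hfull : A1 = Ac → η1 = ηβ)
    (jstar : J) (hjstar : η jstar < ηβ) :
    ∀ j, η j = η jstar := by
  have hnot_full : A1 ≠ Ac := fun h => by linarith [hfull h, hη jstar, hh2 jstar]
  have hA1A : A1 = A := by
    rcases min_choice A Ac with h | h <;> rw [h] at hA1
    exacts [hA1, absurd hA1 hnot_full]
  have hdry : ∀ j, h2 j = 0 := fun j =>
    Finset.eq_zero_of_sum_mul_eq_zero (fun j _ => hh2 j) (fun j _ => hΔy j) (by linarith) j
      (Finset.mem_univ j)
  intro j
  rw [hη j, hη jstar, hdry j, hdry jstar]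
end

section
/- Fix g > 0, Δt > 0 and a cell area |T| > 0. Let E be a finite edge set; for each e ∈ E let ℓ_e > 0 be the edge length and n_e = (n_{e,x}, n_{e,y}) ∈ ℝ² a vector, with Σ_{e∈E} ℓ_e·n_e = 0. Let the cell carry lake-at-rest data: η₁ ∈ ℝ, h₂ ≥ 0, free surface η = η₁ + h₂, and state Π^n = (h₂, 0, 0) ∈ ℝ³; for each edge e let the neighbour carry η_{1,e} ∈ ℝ and h_{2,e} ≥ 0 with η_{1,e} + h_{2,e} = η. Set η*_e = max(η₁, η_{1,e}) and h̃_e = max(η − η*_e, 0). Let φ be the HLL flux (constructed from F₁(h,q_x,q_y) = (q_x, q_x²/h + (g/2)h², q_x q_y/h), with the conventions above and division by zero equal to zero) with per-edge wave speeds s_{L,e} ≤ 0 ≤ s_{R,e}, s_{L,e} < s_{R,e}. With S^{hrm}(a,b) = (0, (g/2)(a² − b²), 0) and T_{n}^{-1}(a, b, c) = (a, b·n_x − c·n_y, b·n_y + c·n_x), define Π^{n+1*} = Π^n − (Δt/|T|)·Σ_{e∈E} ℓ_e·[ T_{n_e}^{-1} φ((h̃_e, 0, 0), (h̃_e, 0,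 0)) + T_{n_e}^{-1} S^{hrm}(h₂, h̃_e) ]. Then Π^{n+1*} = Π^n. -/
/-- The shallow-water x-directional flux `F₁(h, qx, qy)`. -/
noncomputable def swFlux (g : ℝ) (P : ℝ × ℝ × ℝ) : ℝ × ℝ × ℝ :=
  (P.2.1, P.2.1 ^ 2 / P.1 + g / 2 * P.1 ^ 2, P.2.1 * P.2.2 / P.1)

/-- The HLL numerical flux with wave speeds `sL ≤ sR`. -/
noncomputable def hllFlux (g sL sR : ℝ) (PL PR : ℝ × ℝ × ℝ) : ℝ × ℝ × ℝ :=
  if 0 ≤ sL then swFlux g PL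
  else if 0 < sR then
    (sR - sL)⁻¹ • (sR • swFlux g PL - sL • swFlux g PR + (sL * sR) • (PR - PL))
  else swFlux g PR

/-- The hydrostatic source correction term `S^{hrm}(a, b)`. -/
noncomputable def Shrm (g a b : ℝ) : ℝ × ℝ × ℝ := (0, g / 2 * (a ^ 2 - b ^ 2), 0)

/-- The inverse rotation `T_n⁻¹` associated with the edge normal `n`. -/
def rotInv (n : ℝ × ℝ) (v : ℝ × ℝ × ℝ) : ℝ × ℝ × ℝ :=
  (v.1, v.2.1 * n.1 - v.2.2 * n.2, v.2.1 * n.2 + v.2.2 * n.1)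

/-!
Along each edge both reconstructed states coincide, so the consistent HLL flux reduces to the
physical flux `(0, g h̃²/2, 0)` of a fluid at rest. Adding the hydrostatic correction
`(0, g (h₂² - h̃²)/2, 0)` removes every trace of `h̃`, leaving the same pressure `g h₂²/2` on each
edge; rotated to the edge normals and weighted by the edge lengths, these sum to zero because
`∑ ℓₑ nₑ = 0`.
-/

theorem hllFlux_self (g sL sR : ℝ) (P : ℝ × ℝ × ℝ) : hllFlux g sL sR P P = swFlux g P := by
  unfold hllFlux
  split_ifs with hL hR
  · rfl
  · have hne : sR - sL ≠ 0 := by linarith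
    rw [sub_self, smul_zero, add_zero, ← sub_smul, smul_smul, inv_mul_cancel₀ hne, one_smul]
  · rfl

theorem swFlux_at_rest (g h : ℝ) : swFlux g (h, 0, 0) = (0, g / 2 * h ^ 2, 0) := by
  simp [swFlux]

theorem swFlux_at_rest_add_Shrm (g a b : ℝ) :
    swFlux g (b, 0, 0) + Shrm g a b = (0, g / 2 * a ^ 2, 0) := by
  rw [swFlux_at_rest, Shrm, Prod.mk_add_mk, Prod.mk_add_mk]
  ring_nf

theorem rotInv_add (n : ℝ × ℝ) (u v : ℝ × ℝ × ℝ) :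
    rotInv n (u + v) = rotInv n u + rotInv n v := by
  simp only [rotInv, Prod.fst_add, Prod.snd_add, Prod.mk_add_mk, Prod.mk.injEq]
  refine ⟨trivial, by ring, by ring⟩

theorem rotInv_pressure (n : ℝ × ℝ) (p : ℝ) : rotInv n (0, p, 0) = (0, p • n) := by
  simp only [rotInv, zero_mul, sub_zero, add_zero]
  rfl

theorem sum_smul_rotInv_pressure {E : Type*} [Fintype E] {ℓ : E → ℝ} {n : E → ℝ × ℝ}
    (hclosed : ∑ e, ℓ e • n e = 0) (p : ℝ) :
    ∑ e, ℓ e • rotInv (n e) (0, p, 0) = 0 := by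
  calc ∑ e, ℓ e • rotInv (n e) (0, p, 0)
      = ∑ e, ((0 : ℝ), p • ℓ e • n e) := by
        refine Finset.sum_congr rfl fun e _ => ?_
        rw [rotInv_pressure, Prod.smul_mk, smul_zero, smul_comm]
    _ = (∑ _e : E, (0 : ℝ), ∑ e, p • ℓ e • n e) := (prod_mk_sum _ _ _).symm
    _ = (0, p • ∑ e, ℓ e • n e) := by rw [Finset.sum_const_zero, Finset.smul_sum]
    _ = 0 := by rw [hclosed, smul_zero]; rfl

theorem upper_layer_well_balanced_general (g Δt T : ℝ) (E : Type*) [Fintype E]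
    (ℓ : E → ℝ) (n : E → ℝ × ℝ)
    (hclosed : ∑ e, ℓ e • n e = (0 : ℝ × ℝ))
    (h2 : ℝ)
    (htilde : E → ℝ)
    (sL sR : E → ℝ)
    (Pn Pnew : ℝ × ℝ × ℝ)
    (hPnew : Pnew = Pn - (Δt / T) •
      ∑ e, ℓ e • (rotInv (n e)
          (hllFlux g (sL e) (sR e) (htilde e, 0, 0) (htilde e, 0, 0))
        + rotInv (n e) (Shrm g h2 (htilde e)))) :
    Pnew = Pn := by
  have hedge : ∀ e, rotInv (n e) (hllFlux g (sL e) (sR e) (htilde e, 0, 0) (htilde e, 0, 0))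
      + rotInv (n e) (Shrm g h2 (htilde e)) = rotInv (n e) (0, g / 2 * h2 ^ 2, 0) := fun e => by
    rw [← rotInv_add, hllFlux_self, swFlux_at_rest_add_Shrm]
  simp_rw [hedge] at hPnew
  rw [hPnew, sum_smul_rotInv_pressure hclosed, smul_zero, sub_zero]

/-- The upper-layer apparent-topography hydrostatic reconstruction scheme is
well-balanced with respect to lake at rest. -/
theorem upper_layer_well_balanced (g Δt T : ℝ) (hg : 0 < g) (hΔt : 0 < Δt)
    (hT : 0 < T) (E : Type*) [Fintype E]
    (ℓ : E → ℝ) (n : E → ℝ × ℝ) (hℓ : ∀ e, 0 < ℓ e)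
    (hclosed : ∑ e, ℓ e • n e = (0 : ℝ × ℝ))
    (η1 h2 : ℝ) (hh2 : 0 ≤ h2)
    (η1e h2e : E → ℝ) (hh2e : ∀ e, 0 ≤ h2e e)
    (η : ℝ) (hη : η = η1 + h2) (hlake : ∀ e, η1e e + h2e e = η)
    (ηstar htilde : E → ℝ)
    (hηstar : ∀ e, ηstar e = max η1 (η1e e))
    (hhtilde : ∀ e, htilde e = max (η - ηstar e) 0)
    (sL sR : E → ℝ) (hsL : ∀ e, sL e ≤ 0) (hsR : ∀ e, 0 ≤ sR e)
    (hss : ∀ e, sL e < sR e)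
    (Pn Pnew : ℝ × ℝ × ℝ) (hPn : Pn = (h2, 0, 0))
    (hPnew : Pnew = Pn - (Δt / T) •
      ∑ e, ℓ e • (rotInv (n e)
          (hllFlux g (sL e) (sR e) (htilde e, 0, 0) (htilde e, 0, 0))
        + rotInv (n e) (Shrm g h2 (htilde e)))) :
    Pnew = Pn :=
  upper_layer_well_balanced_general g Δt T E ℓ n hclosed h2 htilde sL sR Pn Pnew hPnew
end
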